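/- arXiv:1606.04752 — 3 statements merged into one kernel-verified Lean document; each statement's English description precedes it below -/
import Mathlib

section
/- Let H be a complex inner product space, q ∈ ℝ, M ≥ 1, vectors ξ₁, …, ξ_M ∈ H, and simple tensors u ∈ H^{⊗p}, v ∈ H^{⊗s}. For each r = (r₁,…,r_M) ∈ {0,1}^M let s_w(r) = #{w' : w ≤ w' ≤ M and r_{w'} = 0} and e(r) = Σ_{w=1}^M r_w·(p − s_w(r)). Then (a_{ξ₁} ∘ a_{ξ₂} ∘ ⋯ ∘ a_{ξ_M})(u⊗v) = Σ_{r∈{0,1}^M} q^{e(r)} · (A_L^r u) ⊗ (A_R^r v), where A_L^r is the composition of the operators a_{ξ_w} over those w with r_w = 0 and A_R^r is the composition of the operators a_{ξ_w} over those w with r_w = 1, in each case composed so that the indices w appear in the same relative order as in a_{ξ₁} ∘ ⋯ ∘ a_{ξ_M} (i.e., the largest index is applied first). -/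
noncomputable section

variable {H : Type*} [NormedAddCommGroup H] [InnerProductSpace ℂ H]

/-- The simple tensor `ζ 0 ⊗ ⋯ ⊗ ζ (n-1)` in the algebraic Fock space
`F(H) = ⨁ₙ H^{⊗n}`, realized as the tensor algebra (for `n = 0` this is the
vacuum vector `Ω = 1`). -/
def st (n : ℕ) (ζ : Fin n → H) : TensorAlgebra ℂ H :=
  (List.ofFn fun i => TensorAlgebra.ι ℂ (ζ i)).prod

/-- Remove the `i`-th entry from a tuple. -/
def removeNth {α : Type*} : {n : ℕ} → Fin n → (Fin n → α) → Fin (n - 1) → α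
  | 0, i, _ => i.elim0
  | _ + 1, i, ζ => fun j => ζ (i.succAbove j)

/-- `a` is the family of `q`-annihilation operators on the algebraic Fock space:
`a_ξ Ω = 0` and `a_ξ (ζ₁⊗⋯⊗ζₙ) = Σᵢ q^(i-1) ⟨ξ, ζᵢ⟩ ζ₁⊗⋯⊗ζ̂ᵢ⊗⋯⊗ζₙ`. -/
def IsAnnihilation (q : ℝ) (a : H → Module.End ℂ (TensorAlgebra ℂ H)) : Prop :=
  ∀ (ξ : H) (n : ℕ) (ζ : Fin n → H),
    a ξ (st n ζ) =
      ∑ i : Fin n, ((q : ℂ) ^ (i : ℕ) * (inner ℂ ξ (ζ i) : ℂ)) • st (n - 1) (removeNth i ζ)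

/-- For a bit string `r : Fin M → Bool` (`false` = routed left, `true` = routed right),
`sCount r w = #{w' : w ≤ w' ∧ r w' = 0}`. -/
def sCount {M : ℕ} (r : Fin M → Bool) (w : Fin M) : ℕ :=
  (Finset.univ.filter fun w' : Fin M => w ≤ w' ∧ r w' = false).card

/-- The exponent `e(r) = Σ_w r_w ⬝ (p − s_w(r))`. -/
def eExp {M : ℕ} (p : ℕ) (r : Fin M → Bool) : ℕ :=
  ∑ w : Fin M, if r w then p - sCount r w else 0

/-! The annihilation operator removes one vector, weighted by `q` to the power of its position,
so for `x ∈ H^{⊗d}` it obeys the twisted Leibniz rule `a_ξ (x ⊗ y) = a_ξ x ⊗ y + q^d x ⊗ a_ξ y`.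
Expanding `a_{ξ₁} ⋯ a_{ξ_M} (u ⊗ v)` by this rule, starting with `a_{ξ_M}`, each operator is routed
either to the left factor, lowering its rank by one, or to the right factor, at the cost of a factor
`q ^ (current rank of the left factor)`. When `a_{ξ_w}` is routed right, that rank is `p` minus the
number of operators with larger index routed left, which is `p - s_w(r)`. -/

def listTensor (l : List H) : TensorAlgebra ℂ H := (l.map (TensorAlgebra.ι ℂ)).prod

lemma st_eq_listTensor (n : ℕ) (ζ : Fin n → H) : st n ζ = listTensor (List.ofFn ζ) := by
  simp only [st, listTensor, List.map_ofFn]; rfl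

lemma listTensor_append (l m : List H) : listTensor (l ++ m) = listTensor l * listTensor m := by
  simp [listTensor]

lemma ofFn_removeNth {α : Type*} {n : ℕ} (i : Fin n) (ζ : Fin n → α) :
    List.ofFn (removeNth i ζ) = (List.ofFn ζ).eraseIdx i := by
  cases n with
  | zero => exact i.elim0
  | succ n =>
    refine List.ext_getElem (by simp [List.length_eraseIdx, Nat.le_of_lt_succ i.isLt])
      fun j _ _ => ?_
    simp only [removeNth, List.getElem_ofFn, List.getElem_eraseIdx, Fin.succAbove]
    split_ifs <;> simp_all [Fin.lt_def]

/-- `H^{⊗d}` as a subspace of the Fock space. -/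
def fockLevel (d : ℕ) : Submodule ℂ (TensorAlgebra ℂ H) :=
  Submodule.span ℂ (listTensor '' {l | l.length = d})

lemma span_range_listTensor : Submodule.span ℂ (Set.range (listTensor (H := H))) = ⊤ := by
  refine Submodule.eq_top_iff'.2 fun x => ?_
  induction x using TensorAlgebra.induction with
  | algebraMap r =>
    rw [Algebra.algebraMap_eq_smul_one]
    exact Submodule.smul_mem _ r (Submodule.subset_span ⟨[], by simp [listTensor]⟩)
  | ι x => exact Submodule.subset_span ⟨[x], by simp [listTensor]⟩
  | mul x y hx hy =>
    have hxy := Submodule.mul_mem_mul hx hy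
    rw [Submodule.span_mul_span] at hxy
    refine Submodule.span_mono ?_ hxy
    rintro _ ⟨_, ⟨l, rfl⟩, _, ⟨m, rfl⟩, rfl⟩
    exact ⟨l ++ m, listTensor_append l m⟩
  | add x y hx hy => exact add_mem hx hy

def filteredProd {A : Type*} [Monoid A] {M : ℕ} (f : Fin M → A) (P : Fin M → Bool) : A :=
  (((List.finRange M).filter P).map f).prod

lemma filteredProd_succ {A : Type*} [Monoid A] {M : ℕ} (f : Fin (M + 1) → A)
    (P : Fin (M + 1) → Bool) :
    filteredProd f P = filteredProd (fun w => f w.castSucc) (fun w => P w.castSucc) *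
      if P (Fin.last M) then f (Fin.last M) else 1 := by
  rw [filteredProd, List.finRange_succ_last, List.filter_append, List.filter_map, List.map_append,
    List.map_map, List.prod_append]
  congr 1
  by_cases h : P (Fin.last M) <;> simp [h]

lemma sCount_snoc_castSucc {M : ℕ} (r : Fin M → Bool) (b : Bool) (w : Fin M) :
    sCount (Fin.snoc r b : Fin (M + 1) → Bool) w.castSucc = sCount r w + if b then 0 else 1 := by
  simp only [sCount, Finset.card_filter, Fin.sum_univ_castSucc, Fin.castSucc_le_castSucc_iff,
    Fin.snoc_castSucc, Fin.snoc_last]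
  cases b <;> simp [Fin.le_last]

lemma eExp_snoc_false {M : ℕ} (p : ℕ) (r : Fin M → Bool) :
    eExp p (Fin.snoc r false : Fin (M + 1) → Bool) = eExp (p - 1) r := by
  simp [eExp, Fin.sum_univ_castSucc, sCount_snoc_castSucc, Nat.sub_sub, Nat.add_comm 1]

lemma eExp_snoc_true {M : ℕ} (p : ℕ) (r : Fin M → Bool) :
    eExp p (Fin.snoc r true : Fin (M + 1) → Bool) = eExp p r + p := by
  have hlast : sCount (Fin.snoc r true : Fin (M + 1) → Bool) (Fin.last M) = 0 := by
    simp [sCount, Fin.last_le_iff]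
  simp [eExp, Fin.sum_univ_castSucc, sCount_snoc_castSucc, hlast]

namespace IsAnnihilation

variable {q : ℝ} {a : H → Module.End ℂ (TensorAlgebra ℂ H)}

lemma apply_listTensor (ha : IsAnnihilation q a) (ξ : H) (l : List H) :
    a ξ (listTensor l) = ∑ i ∈ Finset.range l.length,
      ((q : ℂ) ^ i * inner ℂ ξ (l.getD i 0)) • listTensor (l.eraseIdx i) := by
  have h := ha ξ l.length l.get
  rw [st_eq_listTensor, List.ofFn_get] at h
  rw [h, Finset.sum_range]
  refine Finset.sum_congr rfl fun i _ => ?_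
  rw [st_eq_listTensor, ofFn_removeNth, List.ofFn_get, List.getD_eq_getElem _ _ i.isLt]
  rfl

lemma apply_listTensor_append (ha : IsAnnihilation q a) (ξ : H) (l m : List H) :
    a ξ (listTensor (l ++ m)) = a ξ (listTensor l) * listTensor m +
      ((q : ℂ) ^ l.length) • (listTensor l * a ξ (listTensor m)) := by
  rw [ha.apply_listTensor, List.length_append, Finset.sum_range_add, ha.apply_listTensor,
    ha.apply_listTensor, Finset.sum_mul, Finset.mul_sum, Finset.smul_sum]
  congr 1
  · refine Finset.sum_congr rfl fun i hi => ?_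
    have hi : i < l.length := Finset.mem_range.1 hi
    rw [smul_mul_assoc, ← listTensor_append, List.eraseIdx_append_of_lt_length hi,
      List.getD_append _ _ _ _ hi]
  · refine Finset.sum_congr rfl fun j _ => ?_
    rw [List.eraseIdx_append_of_length_le (Nat.le_add_right _ _),
      List.getD_append_right _ _ _ _ (Nat.le_add_right _ _), Nat.add_sub_cancel_left,
      listTensor_append, mul_smul_comm, smul_smul, pow_add, mul_assoc]

lemma apply_listTensor_mul (ha : IsAnnihilation q a) (ξ : H) (l : List H)
    (y : TensorAlgebra ℂ H) :
    a ξ (listTensor l * y) =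
      a ξ (listTensor l) * y + ((q : ℂ) ^ l.length) • (listTensor l * a ξ y) := by
  refine LinearMap.congr_fun (LinearMap.ext_on (f := a ξ ∘ₗ LinearMap.mulLeft ℂ (listTensor l))
    (g := LinearMap.mulLeft ℂ (a ξ (listTensor l)) +
      ((q : ℂ) ^ l.length) • (LinearMap.mulLeft ℂ (listTensor l) ∘ₗ a ξ))
    span_range_listTensor ?_) y
  rintro _ ⟨m, rfl⟩
  simp [← listTensor_append, ha.apply_listTensor_append]

lemma apply_mul (ha : IsAnnihilation q a) (ξ : H) {d : ℕ} {x : TensorAlgebra ℂ H}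
    (hx : x ∈ fockLevel d) (y : TensorAlgebra ℂ H) :
    a ξ (x * y) = a ξ x * y + ((q : ℂ) ^ d) • (x * a ξ y) := by
  refine LinearMap.eqOn_span' (f := a ξ ∘ₗ LinearMap.mulRight ℂ y)
    (g := LinearMap.mulRight ℂ y ∘ₗ a ξ + ((q : ℂ) ^ d) • LinearMap.mulRight ℂ (a ξ y)) ?_ hx
  rintro _ ⟨l, rfl, rfl⟩
  simp [ha.apply_listTensor_mul]

lemma apply_mem_fockLevel (ha : IsAnnihilation q a) (ξ : H) {d : ℕ} {x : TensorAlgebra ℂ H}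
    (hx : x ∈ fockLevel d) : a ξ x ∈ fockLevel (d - 1) := by
  refine (Submodule.span_le (p := (fockLevel (d - 1)).comap (a ξ))).2 ?_ hx
  rintro _ ⟨l, rfl, rfl⟩
  rw [SetLike.mem_coe, Submodule.mem_comap, ha.apply_listTensor]
  refine Submodule.sum_mem _ fun i hi => Submodule.smul_mem _ _ (Submodule.subset_span ?_)
  exact ⟨l.eraseIdx i, List.length_eraseIdx_of_lt (Finset.mem_range.1 hi), rfl⟩

lemma prod_apply_mul (ha : IsAnnihilation q a) {M : ℕ} (ξ : Fin M → H) {p : ℕ}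
    {x : TensorAlgebra ℂ H} (hx : x ∈ fockLevel p) (y : TensorAlgebra ℂ H) :
    (List.ofFn fun w => a (ξ w)).prod (x * y) =
      ∑ r : Fin M → Bool, ((q : ℂ) ^ eExp p r) •
        (filteredProd (fun w => a (ξ w)) (fun w => !(r w)) x *
          filteredProd (fun w => a (ξ w)) r y) := by
  induction M generalizing p x y with
  | zero => simp [eExp, filteredProd]
  | succ M ih =>
    rw [List.ofFn_succ', List.prod_concat, Module.End.mul_apply, ha.apply_mul _ hx, map_add,
      map_smul, ih (fun w => ξ w.castSucc) (ha.apply_mem_fockLevel _ hx),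
      ih (fun w => ξ w.castSucc) hx, ← (Fin.snocEquiv _).sum_comp, Fintype.sum_prod_type,
      Fintype.sum_bool, add_comm, Finset.smul_sum]
    congr 1 <;> refine Finset.sum_congr rfl fun r _ => ?_
    · simp [filteredProd_succ, Fin.snocEquiv, eExp_snoc_true, smul_smul, pow_add, mul_comm]
    · simp [filteredProd_succ, Fin.snocEquiv, eExp_snoc_false]

end IsAnnihilation

theorem stmt3_general (q : ℝ) (a : H → Module.End ℂ (TensorAlgebra ℂ H))
    (ha : IsAnnihilation q a) (M : ℕ) (ξ : Fin M → H)
    (p s : ℕ) (u : Fin p → H) (v : Fin s → H) :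
    ((List.ofFn fun w => a (ξ w)).prod) (st p u * st s v) =
      ∑ r : Fin M → Bool,
        ((q : ℂ) ^ eExp p r) •
          ((((List.finRange M).filter fun w => !(r w)).map fun w => a (ξ w)).prod (st p u) *
           (((List.finRange M).filter fun w => r w).map fun w => a (ξ w)).prod (st s v)) :=
  ha.prod_apply_mul ξ (Submodule.subset_span ⟨List.ofFn u, by simp, (st_eq_listTensor p u).symm⟩)
    (st s v)

theorem stmt3 (q : ℝ) (a : H → Module.End ℂ (TensorAlgebra ℂ H))
    (ha : IsAnnihilation q a) (M : ℕ) (hM : 1 ≤ M) (ξ : Fin M → H)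
    (p s : ℕ) (u : Fin p → H) (v : Fin s → H) :
    ((List.ofFn fun w => a (ξ w)).prod) (st p u * st s v) =
      ∑ r : Fin M → Bool,
        ((q : ℂ) ^ eExp p r) •
          ((((List.finRange M).filter fun w => !(r w)).map fun w => a (ξ w)).prod (st p u) *
           (((List.finRange M).filter fun w => r w).map fun w => a (ξ w)).prod (st s v)) :=
  stmt3_general q a ha M ξ p s u v
end
end

section
/- Let H be a complex inner product space and q ∈ ℝ. For every ξ ∈ H, every n ≥ 0, every f ∈ H^{⊗n} and every g ∈ H^{⊗(n+1)}, one has ⟨c_ξ f, g⟩_q = ⟨f, a_ξ g⟩_q; that is, the q-creation operator c_ξ and the q-annihilation operator a_ξ are adjoint to each other with respect to the q-sesquilinear form. -/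
noncomputable section

open scoped TensorProduct
open PiTensorProduct

/-- The number of inversions of a permutation `π` of `Fin n`. -/
def inversions {n : ℕ} (π : Equiv.Perm (Fin n)) : ℕ :=
  (Finset.univ.filter fun p : Fin n × Fin n => p.1 < p.2 ∧ π p.2 < π p.1).card

/-! Every permutation `π` of `Fin (n + 1)` is `permCons (π 0) σ` for a unique `σ`, and its
inversions are those of `σ` plus the `π 0` inversions involving `0`. So the `q`-form on simple
tensors, the `q`-permanent of their Gram matrix, has a `q`-Laplace expansion along the first row;
when that row is `⟨ξ, ζ_i⟩`, the expansion is the definition of `⟨f, a_ξ g⟩_q`. -/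

open Equiv Finset

section permCons

variable {n : ℕ}

def permCons (i : Fin (n + 1)) (σ : Perm (Fin n)) : Perm (Fin (n + 1)) :=
  (finSuccEquiv n).trans ((optionCongr σ).trans (finSuccEquiv' i).symm)

@[simp] lemma permCons_zero (i : Fin (n + 1)) (σ : Perm (Fin n)) : permCons i σ 0 = i := by
  simp [permCons, finSuccEquiv'_symm_none]

@[simp] lemma permCons_succ (i : Fin (n + 1)) (σ : Perm (Fin n)) (j : Fin n) :
    permCons i σ j.succ = i.succAbove (σ j) := by
  simp [permCons, finSuccEquiv'_symm_some]

lemma permCons_bijective :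
    Function.Bijective fun p : Fin (n + 1) × Perm (Fin n) => permCons p.1 p.2 := by
  refine (Fintype.bijective_iff_injective_and_card _).2 ⟨?_, ?_⟩
  · rintro ⟨i, σ⟩ ⟨i', σ'⟩ h
    obtain rfl : i = i' := by simpa using DFunLike.congr_fun h 0
    have hσ : σ = σ' := Equiv.ext fun j =>
      Fin.succAbove_right_injective (p := i) (by simpa using DFunLike.congr_fun h j.succ)
    rw [hσ]
  · simp [Fintype.card_perm, Nat.factorial_succ]

lemma inversions_permCons (i : Fin (n + 1)) (σ : Perm (Fin n)) :
    inversions (permCons i σ) = i + inversions σ := by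
  unfold inversions
  rw [card_filter, card_filter, Fintype.sum_prod_type, Fin.sum_univ_succ]
  congr 1
  · rw [← card_filter, ← Fin.card_Iio i, ← card_map (permCons i σ).toEmbedding]
    congr 1
    ext k
    simp only [mem_map_equiv, mem_filter, mem_univ, true_and, permCons_zero, apply_symm_apply,
      mem_Iio, and_iff_right_iff_imp]
    refine fun hk => Fin.pos_iff_ne_zero.2 fun h0 => hk.ne ?_
    simpa using congrArg (permCons i σ) h0
  · rw [Fintype.sum_prod_type]
    refine sum_congr rfl fun j _ => ?_
    rw [Fin.sum_univ_succ]
    simp only [permCons_zero, permCons_succ, Fin.not_lt_zero, false_and, if_false, zero_add,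
      Fin.succ_lt_succ_iff, Fin.succAbove_lt_succAbove_iff]

end permCons

def qPermanent {R : Type*} [CommSemiring R] {n : ℕ} (q : R) (M : Matrix (Fin n) (Fin n) R) : R :=
  ∑ π : Perm (Fin n), q ^ inversions π * ∏ i, M i (π i)

lemma qPermanent_succ_row_zero {R : Type*} [CommSemiring R] {n : ℕ} (q : R)
    (M : Matrix (Fin (n + 1)) (Fin (n + 1)) R) :
    qPermanent q M = ∑ i : Fin (n + 1),
      q ^ (i : ℕ) * M 0 i * qPermanent q (M.submatrix Fin.succ i.succAbove) := by
  unfold qPermanent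
  rw [← Fintype.sum_bijective _ permCons_bijective
    (fun p => q ^ inversions (permCons p.1 p.2) * ∏ j, M j (permCons p.1 p.2 j)) _ fun _ => rfl,
    Fintype.sum_prod_type]
  refine sum_congr rfl fun i _ => ?_
  rw [mul_sum]
  refine sum_congr rfl fun σ _ => ?_
  rw [inversions_permCons, pow_add, Fin.prod_univ_succ]
  simp only [permCons_zero, permCons_succ, Matrix.submatrix_apply]
  ring

theorem stmt5 {H : Type*} [NormedAddCommGroup H] [InnerProductSpace ℂ H]
    (q : ℝ)
    -- the q-sesquilinear forms on the algebraic tensor powers `H^{⊗n}`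
    (B : ∀ n : ℕ, (⨂[ℂ]^n) H →ₗ⋆[ℂ] (⨂[ℂ]^n) H →ₗ[ℂ] ℂ)
    (hB : ∀ (n : ℕ) (ξ ζ : Fin n → H),
      B n (tprod ℂ ξ) (tprod ℂ ζ) =
        ∑ π : Equiv.Perm (Fin n),
          (q : ℂ) ^ inversions π * ∏ i : Fin n, (inner ℂ (ξ i) (ζ (π i)) : ℂ))
    -- the q-creation operators
    (c : H → ∀ n : ℕ, (⨂[ℂ]^n) H →ₗ[ℂ] (⨂[ℂ]^(n + 1)) H)
    (hc : ∀ (ξ : H) (n : ℕ) (ζ : Fin n → H), c ξ n (tprod ℂ ζ) = PiTensorProduct.tprod ℂ (Fin.cons ξ ζ))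
    -- the q-annihilation operators
    (a : H → ∀ n : ℕ, (⨂[ℂ]^(n + 1)) H →ₗ[ℂ] (⨂[ℂ]^n) H)
    (ha : ∀ (ξ : H) (n : ℕ) (ζ : Fin (n + 1) → H),
      a ξ n (tprod ℂ ζ) =
        ∑ i : Fin (n + 1),
          ((q : ℂ) ^ (i : ℕ) * (inner ℂ ξ (ζ i) : ℂ)) • tprod ℂ (ζ ∘ i.succAbove))
    (ξ : H) (n : ℕ) (f : (⨂[ℂ]^n) H) (g : (⨂[ℂ]^(n + 1)) H) :
    B (n + 1) (c ξ n f) g = B n f (a ξ n g) := by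
  have hB' : ∀ (m : ℕ) (x y : Fin m → H),
      B m (tprod ℂ x) (tprod ℂ y) = qPermanent (q : ℂ) fun i j => inner ℂ (x i) (y j) := hB
  have on_tprod : ∀ (x : Fin n → H) (y : Fin (n + 1) → H),
      B (n + 1) (c ξ n (tprod ℂ x)) (tprod ℂ y) = B n (tprod ℂ x) (a ξ n (tprod ℂ y)) := by
    intro x y
    rw [hc, hB', ha, map_sum]
    refine (qPermanent_succ_row_zero _ _).trans (sum_congr rfl fun i _ => ?_)
    rw [map_smul, hB', smul_eq_mul]
    rfl
  induction f using PiTensorProduct.induction_on with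
  | smul_tprod r x =>
    induction g using PiTensorProduct.induction_on with
    | smul_tprod s y => simp only [map_smul, map_smulₛₗ, LinearMap.smul_apply, on_tprod]
    | add u v hu hv => simp only [map_add, hu, hv]
  | add u v hu hv => simp only [map_add, LinearMap.add_apply, hu, hv]
end
end

section
/- In the bounded modular setting, let q ∈ ℝ and suppose ξ₀ ∈ H_ℝ satisfies Aξ₀ = ξ₀, and let ξ₁, …, ξₙ ∈ H_ℝ. Then ⟨ξ₀^{⊗n}, A^{-1/2}ξ₁ ⊗ ⋯ ⊗ A^{-1/2}ξₙ⟩_q = ⟨ξ₀^{⊗n}, ξ₁ ⊗ ⋯ ⊗ ξₙ⟩_q, where ⟨·,·⟩_q denotes the q-sesquilinear form built from the inner product ⟨·,·⟩_U. Moreover, if q ∈ (−1,1) and the ξᵢ are nonzero, this quantity vanishes if and only if ⟨ξ₀, ξᵢ⟩_U = 0 for at least one i (equivalently, ⟨ξ₀, ξᵢ⟩ = 0 for at least one i). -/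
noncomputable section

/-!
Since `A ξ₀ = ξ₀`, also `A⁻¹ ξ₀ = ξ₀`, hence `(1 + A⁻¹)⁻¹ ξ₀ = ξ₀ / 2` and `⟨ξ₀, ·⟩_U = ⟨ξ₀, ·⟩`.
The positive square root `B` of `A⁻¹` fixes `ξ₀` as well: `B` sends `B ξ₀ - ξ₀` to its
negative, which positivity of `B` forbids unless it vanishes. So
`⟨ξ₀, B η⟩ = ⟨B ξ₀, η⟩ = ⟨ξ₀, η⟩`, proving the first claim, and the `q`-form factors as
`(∑_π q^{i(π)}) ∏ᵢ ⟨ξ₀, ξᵢ⟩`. By the Mahonian identity `∑_π q^{i(π)} = ∏_{k<n} (1 + q + ⋯ + q^k)`,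
obtained by inserting the largest value into a permutation of `n` letters at each of the `n + 1`
positions, the first factor is positive for `q > -1`.
-/

open Finset

namespace Equiv.Perm

variable {n : ℕ}

def insertLast (σ : Perm (Fin n)) (k : Fin (n + 1)) : Perm (Fin (n + 1)) :=
  (finSuccEquiv' k).trans ((optionCongr σ).trans (finSuccEquiv' (Fin.last n)).symm)

@[simp] lemma insertLast_apply_self (σ : Perm (Fin n)) (k : Fin (n + 1)) :
    insertLast σ k k = Fin.last n := by
  simp [insertLast, finSuccEquiv'_at, finSuccEquiv'_symm_none]

@[simp] lemma insertLast_apply_succAbove (σ : Perm (Fin n)) (k : Fin (n + 1)) (j : Fin n) :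
    insertLast σ k (k.succAbove j) = (σ j).castSucc := by
  simp [insertLast, finSuccEquiv'_succAbove, finSuccEquiv'_symm_some, Fin.succAbove_last]

lemma bijective_insertLast :
    Function.Bijective fun p : Perm (Fin n) × Fin (n + 1) => insertLast p.1 p.2 := by
  rw [Fintype.bijective_iff_injective_and_card]
  refine ⟨?_, by simp [Fintype.card_perm, Nat.factorial_succ, mul_comm]⟩
  rintro ⟨σ, k⟩ ⟨σ', k'⟩ h
  dsimp only at h
  obtain rfl : k = k' := (insertLast σ' k').injective <| by
    rw [insertLast_apply_self, ← h, insertLast_apply_self]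
  obtain rfl : σ = σ' := Equiv.ext fun j => Fin.castSucc_injective _ <| by
    rw [← insertLast_apply_succAbove, ← insertLast_apply_succAbove, h]
  rfl

end Equiv.Perm

open Equiv Perm

lemma inversions_eq_sum {n : ℕ} (π : Perm (Fin n)) :
    inversions π = ∑ a, #{b | a < b ∧ π b < π a} := by
  simp only [inversions, card_filter, Fintype.sum_prod_type]

lemma inversions_insertLast {n : ℕ} (σ : Perm (Fin n)) (k : Fin (n + 1)) :
    inversions (insertLast σ k) = inversions σ + (n - k) := by
  have hrow : #{b | k < b ∧ insertLast σ k b < insertLast σ k k} = n - k := by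
    have hIoi : ({b | k < b ∧ insertLast σ k b < insertLast σ k k} : Finset _) = Ioi k := by
      ext b
      simp only [mem_filter, mem_univ, true_and, mem_Ioi, and_iff_left_iff_imp]
      intro hkb
      rw [insertLast_apply_self, Fin.lt_last_iff_ne_last, ← insertLast_apply_self σ k]
      exact (insertLast σ k).injective.ne hkb.ne'
    rw [hIoi, Fin.card_Ioi, Nat.add_sub_cancel]
  have hrows : ∀ i, #{b | k.succAbove i < b ∧ insertLast σ k b < insertLast σ k (k.succAbove i)}
      = #{j | i < j ∧ σ j < σ i} := by
    intro i
    rw [card_filter, card_filter, Fin.sum_univ_succAbove _ k]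
    simp [Fin.succAbove_lt_succAbove_iff, Fin.le_last]
  rw [inversions_eq_sum, Fin.sum_univ_succAbove _ k, hrow, inversions_eq_sum σ]
  simp only [hrows]
  ring

theorem sum_pow_inversions {R : Type*} [CommSemiring R] (q : R) (n : ℕ) :
    ∑ π : Perm (Fin n), q ^ inversions π = ∏ k : Fin n, ∑ i ∈ range (k + 1), q ^ i := by
  induction n with
  | zero => simp [inversions]
  | succ n ih =>
    have hlast : ∑ k : Fin (n + 1), q ^ (n - k : ℕ) = ∑ i ∈ range (n + 1), q ^ i := by
      rw [Fin.sum_univ_eq_sum_range (fun i => q ^ (n - i)), ← sum_range_reflect]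
      exact sum_congr rfl fun i hi => by
        rw [Nat.add_sub_cancel, Nat.sub_sub_self (Nat.lt_succ_iff.mp (mem_range.mp hi))]
    calc ∑ π : Perm (Fin (n + 1)), q ^ inversions π
        = ∑ p : Perm (Fin n) × Fin (n + 1), q ^ (inversions p.1 + (n - p.2)) :=
          (Fintype.sum_bijective _ bijective_insertLast _ _
            fun p => by rw [inversions_insertLast]).symm
      _ = (∑ σ : Perm (Fin n), q ^ inversions σ) * ∑ k : Fin (n + 1), q ^ (n - k : ℕ) := by
          simp only [pow_add, sum_mul_sum, Fintype.sum_prod_type]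
      _ = ∏ k : Fin (n + 1), ∑ i ∈ range (k + 1), q ^ i := by
          rw [ih, hlast, Fin.prod_univ_castSucc]
          simp

theorem sum_pow_inversions_pos {q : ℝ} (hq : -1 < q) (n : ℕ) :
    0 < ∑ π : Perm (Fin n), q ^ inversions π := by
  rw [sum_pow_inversions]
  exact prod_pos fun k _ => geom_sum_pos' (by linarith) (Nat.succ_ne_zero _)

lemma sum_pow_inversions_mul_prod_comp {R : Type*} [CommSemiring R] (c : R) {n : ℕ}
    (f : Fin n → R) :
    ∑ π : Perm (Fin n), c ^ inversions π * ∏ i, f (π i) =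
      (∑ π : Perm (Fin n), c ^ inversions π) * ∏ i, f i := by
  simp only [Equiv.prod_comp, sum_mul]

lemma ContinuousLinearMap.IsPositive.apply_eq_of_apply_apply_eq {𝕜 E : Type*} [RCLike 𝕜]
    [NormedAddCommGroup E] [InnerProductSpace 𝕜 E] {B : E →L[𝕜] E} (hB : B.IsPositive)
    {x : E} (hx : B (B x) = x) : B x = x := by
  set y := B x - x
  have hBy : B y = -y := by simp [y, hx]
  have hy : ‖y‖ ^ 2 ≤ 0 := by
    simpa [hBy, inner_neg_left, ← real_inner_self_eq_norm_sq] using hB.re_inner_nonneg_left y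
  simpa [y, sub_eq_zero] using hy

theorem stmt14_general {H : Type*} [NormedAddCommGroup H] [InnerProductSpace ℂ H]
    (A Ainv B T : H →L[ℂ] H)
    (hAinv₂ : Ainv ∘L A = 1)
    (hB : B.IsPositive) (hBB : B ∘L B = Ainv)
    (hT₁ : T ∘L (1 + Ainv) = 1)
    (q : ℝ) (ξ₀ : H) (hξ₀A : A ξ₀ = ξ₀)
    (n : ℕ) (ξ : Fin n → H) :
    (∑ π : Equiv.Perm (Fin n),
        (q : ℂ) ^ inversions π *
          ∏ i : Fin n, (2 * (inner ℂ (T ξ₀) (B (ξ (π i))) : ℂ))) =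
      (∑ π : Equiv.Perm (Fin n),
        (q : ℂ) ^ inversions π *
          ∏ i : Fin n, (2 * (inner ℂ (T ξ₀) (ξ (π i)) : ℂ))) ∧
    (-1 < q → q < 1 → (∀ i, ξ i ≠ 0) →
      (((∑ π : Equiv.Perm (Fin n),
          (q : ℂ) ^ inversions π *
            ∏ i : Fin n, (2 * (inner ℂ (T ξ₀) (ξ (π i)) : ℂ))) = 0 ↔
        ∃ i : Fin n, 2 * (inner ℂ (T ξ₀) (ξ i) : ℂ) = 0) ∧
       ((∑ π : Equiv.Perm (Fin n),
          (q : ℂ) ^ inversions π *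
            ∏ i : Fin n, (2 * (inner ℂ (T ξ₀) (ξ (π i)) : ℂ))) = 0 ↔
        ∃ i : Fin n, (inner ℂ ξ₀ (ξ i) : ℂ) = 0))) := by
  have hAinvξ₀ : Ainv ξ₀ = ξ₀ := by simpa [hξ₀A] using congr($hAinv₂ ξ₀)
  have hBξ₀ : B ξ₀ = ξ₀ :=
    hB.apply_eq_of_apply_apply_eq (by simpa [hAinvξ₀] using congr($hBB ξ₀))
  have hTξ₀ : (2 : ℂ) • T ξ₀ = ξ₀ := by
    simpa [hAinvξ₀, ← two_smul ℂ] using congr($hT₁ ξ₀)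
  have hU : ∀ x, 2 * inner ℂ (T ξ₀) x = inner ℂ ξ₀ x := fun x => by
    simpa [inner_smul_left, mul_comm] using congr(inner ℂ $hTξ₀ x)
  have hUB : ∀ x, inner ℂ ξ₀ (B x) = inner ℂ ξ₀ x := fun x => by
    rw [← hB.inner_left_eq_inner_right, hBξ₀]
  simp only [hU, hUB, true_and, and_self]
  intro hq _ _
  have hC : (∑ π : Perm (Fin n), (q : ℂ) ^ inversions π) ≠ 0 := by
    exact_mod_cast (sum_pow_inversions_pos hq n).ne'
  rw [sum_pow_inversions_mul_prod_comp _ fun i => inner ℂ ξ₀ (ξ i), mul_eq_zero]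
  simp only [hC, false_or, prod_eq_zero_iff, mem_univ, true_and]

/-- Bounded modular setting: `J` is a conjugation, `A` a bounded positive invertible
operator with inverse `Ainv` satisfying `J A J = A⁻¹`, `B` is the positive square root
of `A⁻¹` and `T = (1 + A⁻¹)⁻¹`; the new inner product is `⟨ξ, η⟩_U = 2⟨T ξ, η⟩`.
If `ξ₀ ∈ H_ℝ` satisfies `A ξ₀ = ξ₀` and `ξ₁, …, ξₙ ∈ H_ℝ`, then
`⟨ξ₀^{⊗n}, A^{-1/2}ξ₁ ⊗ ⋯ ⊗ A^{-1/2}ξₙ⟩_q = ⟨ξ₀^{⊗n}, ξ₁ ⊗ ⋯ ⊗ ξₙ⟩_q` (both written out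
via the defining sum over permutations); moreover, if `q ∈ (−1,1)` and the `ξᵢ` are
nonzero, this quantity vanishes iff `⟨ξ₀, ξᵢ⟩_U = 0` for some `i`, equivalently iff
`⟨ξ₀, ξᵢ⟩ = 0` for some `i`. -/
theorem stmt14 {H : Type*} [NormedAddCommGroup H] [InnerProductSpace ℂ H] [CompleteSpace H]
    (J : H →ₗ⋆[ℂ] H) (hJ2 : ∀ x, J (J x) = x) (hJiso : ∀ x, ‖J x‖ = ‖x‖)
    (A Ainv B T : H →L[ℂ] H)
    (hA : A.IsPositive) (hAinv₁ : A ∘L Ainv = 1) (hAinv₂ : Ainv ∘L A = 1)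
    (hB : B.IsPositive) (hBB : B ∘L B = Ainv)
    (hJA : ∀ x, J (A x) = Ainv (J x))
    (hT₁ : T ∘L (1 + Ainv) = 1) (hT₂ : (1 + Ainv) ∘L T = 1)
    (q : ℝ) (ξ₀ : H) (hξ₀J : J ξ₀ = ξ₀) (hξ₀A : A ξ₀ = ξ₀)
    (n : ℕ) (ξ : Fin n → H) (hξJ : ∀ i, J (ξ i) = ξ i) :
    (∑ π : Equiv.Perm (Fin n),
        (q : ℂ) ^ inversions π *
          ∏ i : Fin n, (2 * (inner ℂ (T ξ₀) (B (ξ (π i))) : ℂ))) =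
      (∑ π : Equiv.Perm (Fin n),
        (q : ℂ) ^ inversions π *
          ∏ i : Fin n, (2 * (inner ℂ (T ξ₀) (ξ (π i)) : ℂ))) ∧
    (-1 < q → q < 1 → (∀ i, ξ i ≠ 0) →
      (((∑ π : Equiv.Perm (Fin n),
          (q : ℂ) ^ inversions π *
            ∏ i : Fin n, (2 * (inner ℂ (T ξ₀) (ξ (π i)) : ℂ))) = 0 ↔
        ∃ i : Fin n, 2 * (inner ℂ (T ξ₀) (ξ i) : ℂ) = 0) ∧
       ((∑ π : Equiv.Perm (Fin n),
          (q : ℂ) ^ inversions π *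
            ∏ i : Fin n, (2 * (inner ℂ (T ξ₀) (ξ (π i)) : ℂ))) = 0 ↔
        ∃ i : Fin n, (inner ℂ ξ₀ (ξ i) : ℂ) = 0))) :=
  stmt14_general A Ainv B T hAinv₂ hB hBB hT₁ q ξ₀ hξ₀A n ξ
end
end
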